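/- Let $E \subset \mathbb{R}^d$ be an $n$-regular set that has big pieces of Lipschitz graphs with constants $\theta, L > 0$. Then there exists $\delta > 0$ depending only on $d$, $L$, $\theta$ such that: for every $x \in E$ and $0 < r < \operatorname{diam}(E)$, letting $V_0 \in G(d,n)$ be the base plane of a Lipschitz graph $\Gamma$ witnessing the big-pieces condition in $B(x,r)$, one has $\mathcal{H}^n(\pi_V(B(x,r) \cap E)) \ge \delta r^n$ for all $V \in G(d,n)$ with $\|\pi_V - \pi_{V_0}\| < \delta$. In particular, $E$ has plenty of big projections. -/

import Mathlib

open MeasureTheory Metric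
open scoped ENNReal NNReal

noncomputable def projL {d : ℕ} (V : Submodule ℝ (EuclideanSpace ℝ (Fin d))) :
    EuclideanSpace ℝ (Fin d) →L[ℝ] EuclideanSpace ℝ (Fin d) :=
  V.subtypeL.comp (V.orthogonalProjection)

/-- `Γ` is an `n`-dimensional `L`-Lipschitz graph over the plane `V`:
`Γ = {v + f(v) : v ∈ V}` for some `L`-Lipschitz `f : V → V^⊥`. -/
def IsLipGraph (d n : ℕ) (L : ℝ≥0) (V : Submodule ℝ (EuclideanSpace ℝ (Fin d)))
    (Γ : Set (EuclideanSpace ℝ (Fin d))) : Prop :=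
  Module.finrank ℝ V = n ∧
  ∃ f : V → EuclideanSpace ℝ (Fin d),
    (∀ v, f v ∈ Vᗮ) ∧ LipschitzWith L f ∧
    Γ = Set.range fun v : V => (v : EuclideanSpace ℝ (Fin d)) + f v

/-!
On an `L`-Lipschitz graph `Γ` over `V₀` the projection `π_{V₀}` has a `(1 + L)`-Lipschitz
inverse. A projection `π_W` with `(1 + L) ‖π_W - π_{V₀}‖ ≤ 1/2` is a small perturbation of
it, so `π_W` still has a `2(1 + L)`-Lipschitz inverse on `Γ`, and therefore shrinks
`H^n(B(x,r) ∩ E ∩ Γ) ≥ θ rⁿ` by at most the factor `(2(1 + L))ⁿ`.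
-/

theorem AntilipschitzWith.le_hausdorffMeasure_image_of_domRestrict {X Y : Type*}
    [EMetricSpace X] [MeasurableSpace X] [BorelSpace X]
    [EMetricSpace Y] [MeasurableSpace Y] [BorelSpace Y]
    {K : ℝ≥0} {f : X → Y} {s : Set X} (hf : AntilipschitzWith K (s.domRestrict f))
    {d : ℝ} (hd : 0 ≤ d) :
    μH[d] s ≤ (K : ℝ≥0∞) ^ d * μH[d] (f '' s) := by
  have hs : μH[d] s = μH[d] (Set.univ : Set s) := by
    rw [← (isometry_subtype_coe (s := s)).hausdorffMeasure_image (Or.inl hd), Set.image_univ,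
      Subtype.range_coe]
  rw [hs, ← Set.range_domRestrict, ← Set.image_univ]
  exact hf.le_hausdorffMeasure_image hd Set.univ

theorem norm_le_two_mul_norm_apply_of_norm_sub_le {𝕜 E F : Type*} [NontriviallyNormedField 𝕜]
    [SeminormedAddCommGroup E] [NormedSpace 𝕜 E] [SeminormedAddCommGroup F] [NormedSpace 𝕜 F]
    {S T : E →L[𝕜] F} {K : ℝ} (hK : 0 ≤ K) (hST : K * ‖S - T‖ ≤ 1 / 2) {x : E}
    (hx : ‖x‖ ≤ K * ‖T x‖) :
    ‖x‖ ≤ 2 * K * ‖S x‖ := by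
  have hTx : ‖T x‖ ≤ ‖S x‖ + ‖S - T‖ * ‖x‖ := by
    calc ‖T x‖ = ‖S x - (S - T) x‖ := by simp
      _ ≤ ‖S x‖ + ‖(S - T) x‖ := norm_sub_le _ _
      _ ≤ ‖S x‖ + ‖S - T‖ * ‖x‖ := by gcongr; exact (S - T).le_opNorm x
  have hx' : ‖x‖ ≤ K * ‖S x‖ + 1 / 2 * ‖x‖ :=
    calc ‖x‖ ≤ K * ‖T x‖ := hx
      _ ≤ K * ‖S x‖ + (K * ‖S - T‖) * ‖x‖ := by rw [mul_assoc, ← mul_add]; gcongr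
      _ ≤ K * ‖S x‖ + 1 / 2 * ‖x‖ := by gcongr
  linarith

theorem ENNReal.ofReal_mul_le_of_le_coe_mul {δ θ a : ℝ} {c : ℝ≥0} {m : ℝ≥0∞} (hc : c ≠ 0)
    (hδ : δ * c ≤ θ) (ha : 0 ≤ a) (h : ENNReal.ofReal (θ * a) ≤ c * m) :
    ENNReal.ofReal (δ * a) ≤ m := by
  refine le_trans ?_ (ENNReal.div_le_of_le_mul' h)
  rw [ENNReal.le_div_iff_mul_le (Or.inl (by simpa)) (Or.inl ENNReal.coe_ne_top),
    ← ENNReal.ofReal_coe_nnreal, ← ENNReal.ofReal_mul' c.coe_nonneg, mul_right_comm]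
  exact ENNReal.ofReal_le_ofReal (mul_le_mul_of_nonneg_right hδ ha)

section LipschitzGraph

variable {d n : ℕ} {L : ℝ≥0} {V : Submodule ℝ (EuclideanSpace ℝ (Fin d))}
  {Γ : Set (EuclideanSpace ℝ (Fin d))}

theorem projL_add_of_mem_orthogonal {v u : EuclideanSpace ℝ (Fin d)} (hv : v ∈ V)
    (hu : u ∈ Vᗮ) : projL V (v + u) = v := by
  change V.starProjection (v + u) = v
  rw [map_add, Submodule.starProjection_eq_self_iff.mpr hv,
    (Submodule.starProjection_apply_eq_zero_iff V).mpr hu, add_zero]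

theorem IsLipGraph.norm_sub_le_mul_norm_projL (hΓ : IsLipGraph d n L V Γ) {a b}
    (ha : a ∈ Γ) (hb : b ∈ Γ) : ‖a - b‖ ≤ (1 + L) * ‖projL V (a - b)‖ := by
  obtain ⟨-, f, hfV, hf, rfl⟩ := hΓ
  obtain ⟨v, rfl⟩ := ha
  obtain ⟨w, rfl⟩ := hb
  have hproj : projL V ((v + f v) - (w + f w)) = v - w := by
    rw [add_sub_add_comm, projL_add_of_mem_orthogonal (V.sub_mem v.2 w.2)
      (Vᗮ.sub_mem (hfV v) (hfV w))]
  have hfvw : ‖f v - f w‖ ≤ L * ‖(v - w : EuclideanSpace ℝ (Fin d))‖ := by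
    simpa only [dist_eq_norm, ← Submodule.coe_sub, Submodule.coe_norm] using
      hf.dist_le_mul v w
  rw [hproj]
  calc ‖(v + f v) - (w + f w)‖ = ‖(v - w : EuclideanSpace ℝ (Fin d)) + (f v - f w)‖ := by
        rw [add_sub_add_comm]
    _ ≤ (1 + L) * ‖(v - w : EuclideanSpace ℝ (Fin d))‖ := by
        rw [add_mul, one_mul]; exact (norm_add_le _ _).trans (by gcongr)

theorem IsLipGraph.dist_le_mul_dist_of_norm_sub_projL_le (hΓ : IsLipGraph d n L V Γ)
    {P : EuclideanSpace ℝ (Fin d) →L[ℝ] EuclideanSpace ℝ (Fin d)}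
    (hP : (1 + L) * ‖P - projL V‖ ≤ 1 / 2) {a b} (ha : a ∈ Γ) (hb : b ∈ Γ) :
    dist a b ≤ 2 * (1 + L) * dist (P a) (P b) := by
  rw [dist_eq_norm, dist_eq_norm, ← map_sub]
  exact norm_le_two_mul_norm_apply_of_norm_sub_le (by positivity) hP
    (hΓ.norm_sub_le_mul_norm_projL ha hb)

end LipschitzGraph

theorem bplg_implies_pbp_general (d n : ℕ)
    (L : ℝ≥0) (θ : ℝ) (hθ : 0 < θ)
    (E : Set (EuclideanSpace ℝ (Fin d))) :
    ∃ δ : ℝ, 0 < δ ∧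
      ∀ x ∈ E, ∀ r : ℝ, 0 < r → ENNReal.ofReal r < EMetric.diam E →
        ∀ V₀ Γ, IsLipGraph d n L V₀ Γ →
          ENNReal.ofReal (θ * r ^ n) ≤ μH[(n:ℝ)] (ball x r ∩ E ∩ Γ) →
          ∀ W : Submodule ℝ (EuclideanSpace ℝ (Fin d)), Module.finrank ℝ W = n →
            ‖projL W - projL V₀‖ < δ →
            ENNReal.ofReal (δ * r ^ n) ≤ μH[(n:ℝ)] (projL W '' (ball x r ∩ E)) := by
  set K : ℝ≥0 := 2 * (1 + L) with hK
  set δ := min (1 / (K : ℝ)) (θ / (K : ℝ) ^ n)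
  refine ⟨δ, by positivity, fun x _ r hr _ V₀ Γ hΓ hΓE W _ hW => ?_⟩
  set A := ball x r ∩ E ∩ Γ
  have hP : (1 + L) * ‖projL W - projL V₀‖ ≤ 1 / 2 := by
    have : ‖projL W - projL V₀‖ ≤ 1 / K := hW.le.trans (min_le_left _ _)
    calc (1 + L) * ‖projL W - projL V₀‖ ≤ (1 + L) * (1 / K) := by gcongr
      _ = 1 / 2 := by rw [hK]; push_cast; field_simp
  have hanti : AntilipschitzWith K (A.domRestrict (projL W)) :=
    .of_le_mul_dist fun a b => by
      simpa [hK, Subtype.dist_eq] using hΓ.dist_le_mul_dist_of_norm_sub_projL_le hP a.2.2 b.2.2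
  have hA :
      ENNReal.ofReal (θ * r ^ n) ≤ ((K ^ n : ℝ≥0) : ℝ≥0∞) * μH[(n:ℝ)] (projL W '' A) := by
    simpa only [ENNReal.rpow_natCast, ENNReal.coe_pow] using
      hΓE.trans (hanti.le_hausdorffMeasure_image_of_domRestrict n.cast_nonneg)
  have hδ : δ * (K ^ n : ℝ≥0) ≤ θ := by
    rw [NNReal.coe_pow]; exact (le_div_iff₀ (by positivity)).mp (min_le_right _ _)
  exact (ENNReal.ofReal_mul_le_of_le_coe_mul (by positivity) hδ (by positivity) hA).trans
    (measure_mono (Set.image_mono Set.inter_subset_left))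

/-- If an `n`-regular set `E ⊆ ℝ^d` has big pieces of Lipschitz graphs with
constants `θ, L`, then there is `δ > 0`, depending only on `d, L, θ` (and `n`, `C₀`), such
that whenever a Lipschitz graph `Γ` over `V₀` witnesses the big-pieces condition in `B(x,r)`,
every plane `W` with `‖π_W - π_{V₀}‖ < δ` satisfies `H^n(π_W(B(x,r) ∩ E)) ≥ δ r^n`; in
particular `E` has plenty of big projections. -/
theorem bplg_implies_pbp (d n : ℕ) (hn : 0 < n) (hnd : n < d)
    (L : ℝ≥0) (θ : ℝ) (hθ : 0 < θ) (C₀ : ℝ) (hC₀ : 1 ≤ C₀)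
    (E : Set (EuclideanSpace ℝ (Fin d))) (hEclosed : IsClosed E)
    (hreg : ∀ x ∈ E, ∀ r : ℝ, 0 < r → ENNReal.ofReal r < EMetric.diam E →
      ENNReal.ofReal (C₀⁻¹ * r ^ n) ≤ ((μH[(n:ℝ)]).restrict E) (closedBall x r) ∧
      ((μH[(n:ℝ)]).restrict E) (closedBall x r) ≤ ENNReal.ofReal (C₀ * r ^ n))
    (hBPLG : ∀ x ∈ E, ∀ r : ℝ, 0 < r → ENNReal.ofReal r < EMetric.diam E →
      ∃ V₀ Γ, IsLipGraph d n L V₀ Γ ∧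
        ENNReal.ofReal (θ * r ^ n) ≤ μH[(n:ℝ)] (ball x r ∩ E ∩ Γ)) :
    ∃ δ : ℝ, 0 < δ ∧
      ∀ x ∈ E, ∀ r : ℝ, 0 < r → ENNReal.ofReal r < EMetric.diam E →
        ∀ V₀ Γ, IsLipGraph d n L V₀ Γ →
          ENNReal.ofReal (θ * r ^ n) ≤ μH[(n:ℝ)] (ball x r ∩ E ∩ Γ) →
          ∀ W : Submodule ℝ (EuclideanSpace ℝ (Fin d)), Module.finrank ℝ W = n →
            ‖projL W - projL V₀‖ < δ →
            ENNReal.ofReal (δ * r ^ n) ≤ μH[(n:ℝ)] (projL W '' (ball x r ∩ E)) :=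
  bplg_implies_pbp_general d n L θ hθ E
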